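/- If an assignment σ satisfies a Horn CNF formula Γ, then every forced atom of Γ is true under σ, i.e., F(Γ) ⊆ {v | σ v = true}. -/
import Mathlib


/-- The set of forced atoms of a CNF formula `Γ`: the least set of variables closed under
the rule that if a clause `C ∈ Γ` contains a positive literal `(p, true)` and every variable
occurring negatively in `C` is forced, then `p` is forced. -/
inductive Forced {V : Type*} (Γ : Finset (Finset (V × Bool))) : V → Prop
  | step (C : Finset (V × Bool)) (p : V) (hC : C ∈ Γ) (hp : (p, true) ∈ C)
      (h : ∀ q : V, (q, false) ∈ C → Forced Γ q) : Forced Γ p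

/-- If `σ` satisfies a Horn CNF formula `Γ`, then every forced atom of `Γ` is true under
`σ`, i.e. `F(Γ) ⊆ {v | σ v = true}`. -/
theorem forced_subset_of_satisfies_horn {V : Type*} [DecidableEq V]
    (Γ : Finset (Finset (V × Bool)))
    (hHorn : ∀ C ∈ Γ, (C.filter fun l => l.2 = true).card ≤ 1)
    (σ : V → Bool) (hσ : ∀ C ∈ Γ, ∃ l ∈ C, σ l.1 = l.2) :
    {v : V | Forced Γ v} ⊆ {v : V | σ v = true} := by
  intro v hv
  simp only [Set.mem_setOf_eq] at hv ⊢
  induction hv with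
  | step C p hC hp h ih =>
    obtain ⟨l, hlC, hl⟩ := hσ C hC
    rcases l with ⟨q, b⟩
    cases b with
    | false =>
      have := ih q hlC
      simp_all
    | true =>
      have key : (q, true) = (p, true) := by
        have h1 : (q, true) ∈ C.filter fun l => l.2 = true := by
          simp [Finset.mem_filter, hlC]
        have h2 : (p, true) ∈ C.filter fun l => l.2 = true := by
          simp [Finset.mem_filter, hp]
        exact Finset.card_le_one.mp (hHorn C hC) _ h1 _ h2
      simp_all
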